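/- arXiv:2509.00746 — 4 statements merged into one kernel-verified Lean document; each statement's English description precedes it below -/
import Mathlib

section
/- Let M be a natural number, let U and V be M×M complex unitary matrices, let s : {1,…,M} → ℝ, and let φ : {1,…,M} → ℝ. Define M×M complex matrices A and B by A_{ik} = Σ_{j=1}^M conj(V_{ji})·cosh(s_j)·conj(U_{kj}) and B_{ik} = −Σ_{j=1}^M conj(V_{ji})·sinh(s_j)·U_{kj}, and define W_{ik} = Σ_{j=1}^M [ (e^{iφ_j} − 1)·A_{ij}·conj(A_{kj}) − (e^{−iφ_j} − 1)·B_{ij}·conj(B_{kj}) ] and Z_{ik} = Σ_{j=1}^M [ −(e^{iφ_j} − 1)·A_{ij}·B_{kj} + (e^{−iφ_j} − 1)·B_{ij}·A_{kj} ]. Then the pair (I + W, Z) satisfies the canonical conditions: (I + W)·(I + W)ᴴ − Z·Zᴴ = I and (I + W)·Zᵀ = Z·(I + W)ᵀ. -/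
/-!
A pair `(A, B)` satisfies the canonical conditions exactly when its block matrix
`S = [[A, B], [B̄, Ā]]` preserves the indefinite form `K = diag(1, -1)`, i.e. `S K Sᴴ = K`.
Block multiplication composes pairs, and such `S` are closed under products and under the
inverse `K Sᴴ K`, which is the block matrix of `(Aᴴ, -Bᵀ)`. The Bloch–Messiah pair is the
composite of `(Vᴴ, 0)`, `(cosh s, -sinh s)` and `(Uᴴ, 0)`, the phase shifter is `(P, 0)`, and
`(1 + W, Z)` is the pair of `S · diag(P, P̄) · S⁻¹`.
-/

open Matrix

namespace Matrix

section Conjugate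

variable {l m n α : Type*}

theorem transpose_map_star [Star α] (A : Matrix m n α) : Aᵀ.map star = Aᴴ := rfl

theorem conjTranspose_map_star [InvolutiveStar α] (A : Matrix m n α) : Aᴴ.map star = Aᵀ := by
  ext; simp

theorem map_star_conjTranspose [InvolutiveStar α] (A : Matrix m n α) : (A.map star)ᴴ = Aᵀ := by
  ext; simp

theorem map_star_mul [Fintype m] [CommSemiring α] [StarRing α] (A : Matrix l m α)
    (B : Matrix m n α) : (A * B).map star = A.map star * B.map star :=
  Matrix.map_mul (f := starRingEnd α)

theorem mul_diagonal_mul_apply [Fintype m] [DecidableEq m] [NonUnitalNonAssocSemiring α]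
    (X : Matrix l m α) (d : m → α) (Y : Matrix m n α) (i : l) (k : n) :
    (X * diagonal d * Y) i k = ∑ j, X i j * d j * Y j k := by
  rw [mul_apply]
  simp only [mul_diagonal]

end Conjugate

variable {n R : Type*} [Fintype n] [CommRing R] [StarRing R]

def bogoliubov (A B : Matrix n n R) : Matrix (n ⊕ n) (n ⊕ n) R :=
  fromBlocks A B (B.map star) (A.map star)

theorem bogoliubov_mul (A B C D : Matrix n n R) :
    bogoliubov A B * bogoliubov C D =
      bogoliubov (A * C + B * D.map star) (A * D + B * C.map star) := by
  simp [bogoliubov, fromBlocks_multiply, map_star_mul, Matrix.map_add _ star_add, Matrix.map_map,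
    star_involutive.comp_self, add_comm]

variable [DecidableEq n]

def IsCanonicalPair (A B : Matrix n n R) : Prop :=
  A * Aᴴ - B * Bᴴ = 1 ∧ A * Bᵀ = B * Aᵀ

theorem bogoliubov_conjTranspose_neg_transpose (A B : Matrix n n R) :
    bogoliubov Aᴴ (-Bᵀ) = fromBlocks 1 0 0 (-1) * (bogoliubov A B)ᴴ * fromBlocks 1 0 0 (-1) := by
  simp [bogoliubov, fromBlocks_multiply, fromBlocks_conjTranspose, map_star_conjTranspose,
    conjTranspose_map_star, Matrix.map_neg (star : R → R) star_neg, transpose_map_star]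

theorem isCanonicalPair_iff_bogoliubov (A B : Matrix n n R) :
    IsCanonicalPair A B ↔
      bogoliubov A B * fromBlocks 1 0 0 (-1) * (bogoliubov A B)ᴴ = fromBlocks 1 0 0 (-1) := by
  simp only [IsCanonicalPair, bogoliubov, fromBlocks_multiply, fromBlocks_conjTranspose,
    fromBlocks_inj, map_star_conjTranspose, Matrix.mul_one, Matrix.mul_zero, Matrix.mul_neg,
    Matrix.neg_mul, add_zero, zero_add]
  simp only [← sub_eq_add_neg, sub_eq_zero]
  -- the lower blocks are the entrywise conjugates of the upper ones
  refine ⟨fun ⟨h₁, h₂⟩ => ⟨h₁, h₂, ?_, ?_⟩, fun h => ⟨h.1, h.2.1⟩⟩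
  · simpa [map_star_mul, transpose_map_star] using (congrArg (map · star) h₂).symm
  · rw [← neg_sub, neg_inj]
    simpa [map_star_mul, Matrix.map_sub _ star_sub, conjTranspose_map_star] using
      congrArg (map · star) h₁

variable {A B C D : Matrix n n R}

theorem IsCanonicalPair.mul (h₁ : IsCanonicalPair A B) (h₂ : IsCanonicalPair C D) :
    IsCanonicalPair (A * C + B * D.map star) (A * D + B * C.map star) := by
  rw [isCanonicalPair_iff_bogoliubov] at *
  rw [← bogoliubov_mul, conjTranspose_mul]
  calc _ = bogoliubov A B * (bogoliubov C D * fromBlocks 1 0 0 (-1) * (bogoliubov C D)ᴴ) *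
        (bogoliubov A B)ᴴ := by simp only [Matrix.mul_assoc]
    _ = _ := by rw [h₂, h₁]

theorem IsCanonicalPair.inv (h : IsCanonicalPair A B) : IsCanonicalPair Aᴴ (-Bᵀ) := by
  rw [isCanonicalPair_iff_bogoliubov] at h ⊢
  rw [bogoliubov_conjTranspose_neg_transpose]
  set K : Matrix (n ⊕ n) (n ⊕ n) R := fromBlocks 1 0 0 (-1)
  set S := bogoliubov A B
  have hKK : K * K = 1 := by simp [K, fromBlocks_multiply, fromBlocks_one]
  have hKK' : ∀ X, K * (K * X) = X := fun X => by rw [← Matrix.mul_assoc, hKK, Matrix.one_mul]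
  have hK : Kᴴ = K := by simp [K, fromBlocks_conjTranspose]
  -- `K Sᴴ K` is a right inverse of `S`, hence (square matrices) also a left inverse
  have hSinv : K * Sᴴ * K * S = 1 :=
    mul_eq_one_comm.mp <| by rw [← Matrix.mul_assoc, ← Matrix.mul_assoc, h, hKK]
  calc K * Sᴴ * K * K * (K * Sᴴ * K)ᴴ = K * Sᴴ * K * S * K := by
        simp only [conjTranspose_mul, conjTranspose_conjTranspose, hK, Matrix.mul_assoc, hKK']
    _ = K := by rw [hSinv, Matrix.one_mul]

theorem isCanonicalPair_diagonal {c d : n → R}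
    (h : ∀ j, c j * star (c j) - d j * star (d j) = 1) :
    IsCanonicalPair (diagonal c) (diagonal d) := by
  refine ⟨?_, ?_⟩
  · rw [diagonal_conjTranspose, diagonal_mul_diagonal, diagonal_conjTranspose,
      diagonal_mul_diagonal, diagonal_sub, ← diagonal_one]
    exact congrArg diagonal (funext h)
  · simp [diagonal_mul_diagonal, mul_comm]

theorem isCanonicalPair_zero_of_mul_conjTranspose_eq_one (hA : A * Aᴴ = 1) :
    IsCanonicalPair A 0 := by
  simp [IsCanonicalPair, hA]

theorem isCanonicalPair_blochMessiah {U V : Matrix n n R} {c d : n → R} (hU : U * Uᴴ = 1)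
    (hV : V * Vᴴ = 1) (hcd : ∀ j, c j * star (c j) - d j * star (d j) = 1) :
    IsCanonicalPair (Vᴴ * diagonal c * Uᴴ) (Vᴴ * diagonal d * Uᵀ) := by
  have hU' := isCanonicalPair_zero_of_mul_conjTranspose_eq_one (A := Uᴴ)
    (by rw [conjTranspose_conjTranspose]; exact mul_eq_one_comm.mp hU)
  have hV' := isCanonicalPair_zero_of_mul_conjTranspose_eq_one (A := Vᴴ)
    (by rw [conjTranspose_conjTranspose]; exact mul_eq_one_comm.mp hV)
  simpa [conjTranspose_map_star] using (hV'.mul (isCanonicalPair_diagonal hcd)).mul hU'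

theorem isCanonicalPair_blochMessiah_cosh_sinh {U V : Matrix n n ℂ} (hU : U * Uᴴ = 1)
    (hV : V * Vᴴ = 1) (s : n → ℝ) :
    IsCanonicalPair (Vᴴ * diagonal (fun j => (Real.cosh (s j) : ℂ)) * Uᴴ)
      (Vᴴ * diagonal (fun j => -(Real.sinh (s j) : ℂ)) * Uᵀ) := by
  refine isCanonicalPair_blochMessiah hU hV fun j => ?_
  simp only [star_neg, Complex.star_def, Complex.conj_ofReal, ← sq, neg_sq]
  exact_mod_cast Real.cosh_sq_sub_sinh_sq (s j)

theorem IsCanonicalPair.conj (h : IsCanonicalPair A B) (hD : IsCanonicalPair D 0) :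
    IsCanonicalPair (A * D * Aᴴ - B * D.map star * Bᴴ) (B * D.map star * Aᵀ - A * D * Bᵀ) := by
  rw [sub_eq_add_neg, sub_eq_neg_add]
  simpa [conjTranspose_map_star, Matrix.map_neg (star : R → R) star_neg, transpose_map_star] using
    (h.mul hD).mul h.inv

theorem IsCanonicalPair.one_add_conj_diagonal_sub_one (h : IsCanonicalPair A B) {d : n → R}
    (hd : ∀ j, d j * star (d j) = 1) :
    IsCanonicalPair (1 + (A * diagonal (d - 1) * Aᴴ - B * diagonal (star d - 1) * Bᴴ))
      (B * diagonal (star d - 1) * Aᵀ - A * diagonal (d - 1) * Bᵀ) := by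
  have hD : IsCanonicalPair (diagonal d) 0 := by
    rw [← diagonal_zero]
    exact isCanonicalPair_diagonal fun j => by simp [hd]
  have hd₁ : diagonal (d - 1) = diagonal d - 1 := by rw [← diagonal_one, diagonal_sub]; rfl
  have hd₂ : diagonal (star d - 1) = (diagonal d).map star - 1 := by
    rw [map_diagonal_star, ← diagonal_one, diagonal_sub]; rfl
  rw [hd₁, hd₂]
  have hW : 1 + (A * (diagonal d - 1) * Aᴴ - B * ((diagonal d).map star - 1) * Bᴴ) =
      A * diagonal d * Aᴴ - B * (diagonal d).map star * Bᴴ := by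
    nth_rewrite 1 [← h.1]
    noncomm_ring
  have hZ : B * ((diagonal d).map star - 1) * Aᵀ - A * (diagonal d - 1) * Bᵀ =
      B * (diagonal d).map star * Aᵀ - A * diagonal d * Bᵀ := by
    rw [← sub_eq_zero, ← sub_eq_zero.2 h.2]
    noncomm_ring
  rw [hW, hZ]
  exact h.conj hD

end Matrix

/-- With `A`, `B` the Bogoliubov pair of a Gaussian unitary with
Bloch–Messiah data `(U, s, V)`, the pair `(I + W, Z)` of the conjugated phase shifter
`G₀† P(φ) G₀` satisfies the canonical conditions. -/
theorem conjugated_phase_shifter_canonical_conditions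
    (M : ℕ) (U V : Matrix (Fin M) (Fin M) ℂ)
    (hU : U * Uᴴ = 1) (hV : V * Vᴴ = 1) (s : Fin M → ℝ) (φ : Fin M → ℝ)
    (A B W Z : Matrix (Fin M) (Fin M) ℂ)
    (hA : ∀ i k, A i k = ∑ j, star (V j i) * (Real.cosh (s j) : ℂ) * star (U k j))
    (hB : ∀ i k, B i k = -∑ j, star (V j i) * (Real.sinh (s j) : ℂ) * U k j)
    (hW : ∀ i k, W i k = ∑ j,
      ((Complex.exp (Complex.I * (φ j : ℂ)) - 1) * A i j * star (A k j)
        - (Complex.exp (-(Complex.I * (φ j : ℂ))) - 1) * B i j * star (B k j)))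
    (hZ : ∀ i k, Z i k = ∑ j,
      (-((Complex.exp (Complex.I * (φ j : ℂ)) - 1) * A i j * B k j)
        + (Complex.exp (-(Complex.I * (φ j : ℂ))) - 1) * B i j * A k j)) :
    (1 + W) * (1 + W)ᴴ - Z * Zᴴ = 1 ∧ (1 + W) * Zᵀ = Z * (1 + W)ᵀ := by
  set p : Fin M → ℂ := fun j => Complex.exp (Complex.I * φ j)
  have hp : star p = fun j => Complex.exp (-(Complex.I * φ j)) :=
    funext fun j => by simp [p, ← Complex.exp_conj]
  have hAB : IsCanonicalPair A B := by
    have hA' : A = Vᴴ * diagonal (fun j => (Real.cosh (s j) : ℂ)) * Uᴴ := by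
      ext i k; simp [hA, mul_diagonal_mul_apply]
    have hB' : B = Vᴴ * diagonal (fun j => -(Real.sinh (s j) : ℂ)) * Uᵀ := by
      ext i k; simp [hB, mul_diagonal_mul_apply]
    rw [hA', hB']
    exact isCanonicalPair_blochMessiah_cosh_sinh hU hV s
  have hW' : W = A * diagonal (p - 1) * Aᴴ - B * diagonal (star p - 1) * Bᴴ := by
    ext i k
    rw [hW, Matrix.sub_apply, mul_diagonal_mul_apply, mul_diagonal_mul_apply,
      ← Finset.sum_sub_distrib]
    refine Finset.sum_congr rfl fun j _ => ?_
    simp only [hp, p, Pi.sub_apply, Pi.one_apply, conjTranspose_apply]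
    ring
  have hZ' : Z = B * diagonal (star p - 1) * Aᵀ - A * diagonal (p - 1) * Bᵀ := by
    ext i k
    rw [hZ, Matrix.sub_apply, mul_diagonal_mul_apply, mul_diagonal_mul_apply,
      ← Finset.sum_sub_distrib]
    refine Finset.sum_congr rfl fun j _ => ?_
    simp only [hp, p, Pi.sub_apply, Pi.one_apply, transpose_apply]
    ring
  rw [hW', hZ']
  exact hAB.one_add_conj_diagonal_sub_one fun j => by
    rw [← Pi.star_apply, hp, ← Complex.exp_add, add_neg_cancel, Complex.exp_zero]
end

section
/- Let N and L be natural numbers, let u, v : {1,…,L} → ℂ^N, and define the N×N complex matrix W by W_{ik} = Σ_{s=1}^L u^{(s)}_i·v^{(s)}_k. Consider the polynomial F in the 2L variables α_1,…,α_L, β_1,…,β_L over ℂ given by F = ∏_{i=1}^N ( 1 + (Σ_{s=1}^L α_s·u^{(s)}_i)·(Σ_{s'=1}^L β_{s'}·v^{(s')}_i) ). Then Per(I + W) = Σ_{p : {1,…,L} → ℕ} (∏_{s=1}^L p_s!) · [coefficient of the monomial ∏_{s=1}^L α_s^{p_s}·β_s^{p_s} in F]. -/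
open Finset MvPolynomial

section GurvitsAux

variable {N L : ℕ}

/-- Permutations intertwining two functions correspond to families of fiber equivs. -/
def permFiberEquiv {X Y : Type*} (f g : X → Y) :
    {σ : Equiv.Perm X // ∀ x, g (σ x) = f x} ≃ (∀ y, {x // f x = y} ≃ {x // g x = y}) where
  toFun σ y :=
    { toFun := fun x => ⟨σ.1 x.1, by rw [σ.2]; exact x.2⟩
      invFun := fun x => ⟨σ.1.symm x.1, by
        have := σ.2 (σ.1.symm x.1); rw [Equiv.apply_symm_apply] at this; rw [← this]; exact x.2⟩
      left_inv := fun x => by simp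
      right_inv := fun x => by simp }
  invFun e :=
    ⟨((Equiv.sigmaFiberEquiv f).symm.trans ((Equiv.sigmaCongrRight e).trans
        (Equiv.sigmaFiberEquiv g))), fun x => by
      simp [Equiv.sigmaFiberEquiv, Equiv.sigmaCongrRight]
      exact ((e (f x)) ⟨x, rfl⟩).2⟩
  left_inv σ := by
    ext x
    simp [Equiv.sigmaFiberEquiv, Equiv.sigmaCongrRight]
  right_inv e := by
    funext y
    ext x
    obtain ⟨x, hx⟩ := x
    subst hx
    simp [Equiv.sigmaFiberEquiv, Equiv.sigmaCongrRight]

lemma card_perm_intertwine {X Y : Type*} [Fintype X] [DecidableEq X] [Fintype Y] [DecidableEq Y]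
    (f g : X → Y) (P : Equiv.Perm X → Prop) [DecidablePred P]
    (hp : ∀ σ, P σ ↔ ∀ x, g (σ x) = f x) :
    Fintype.card {σ : Equiv.Perm X // P σ} =
      if (∀ y, Fintype.card {x // f x = y} = Fintype.card {x // g x = y})
      then ∏ y, (Fintype.card {x // f x = y}).factorial else 0 := by
  rw [Fintype.card_congr ((Equiv.subtypeEquivRight hp).trans (permFiberEquiv f g)),
    Fintype.card_pi]
  split_ifs with h
  · refine Finset.prod_congr rfl fun y _ => ?_
    obtain ⟨e⟩ := Fintype.card_eq.mp (h y)
    rw [Fintype.card_equiv e]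
  · push_neg at h
    obtain ⟨y, hy⟩ := h
    refine Finset.prod_eq_zero (mem_univ y) ?_
    rw [Fintype.card_eq_zero_iff]
    constructor
    intro e
    exact hy (Fintype.card_congr e)

noncomputable def cfn (u v : Fin L → Fin N → ℂ) (h : Fin N → Option (Fin L × Fin L)) : ℂ :=
  ∏ i, (h i).elim 1 (fun q => u q.1 i * v q.2 i)

noncomputable def Efn (h : Fin N → Option (Fin L × Fin L)) : (Fin L ⊕ Fin L) →₀ ℕ :=
  ∑ i, (h i).elim 0 (fun q => Finsupp.single (Sum.inl q.1) 1 + Finsupp.single (Sum.inr q.2) 1)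

def pL (h : Fin N → Option (Fin L × Fin L)) : Fin L → ℕ :=
  fun s => ∑ i, (if (h i).map Prod.fst = some s then 1 else 0)

def pR (h : Fin N → Option (Fin L × Fin L)) : Fin L → ℕ :=
  fun s => ∑ i, (if (h i).map Prod.snd = some s then 1 else 0)

lemma prod_monomial {R : Type*} [CommSemiring R] {σ ι : Type*} (s : Finset ι)
    (d : ι → σ →₀ ℕ) (c : ι → R) :
    ∏ i ∈ s, MvPolynomial.monomial (d i) (c i)
      = MvPolynomial.monomial (∑ i ∈ s, d i) (∏ i ∈ s, c i) := by
  induction s using Finset.cons_induction with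
  | empty => simp
  | cons a s ha ih => simp [Finset.prod_cons, Finset.sum_cons, ih, MvPolynomial.monomial_mul]

lemma F_eq (u v : Fin L → Fin N → ℂ) :
    (∏ i : Fin N,
      (1 + (∑ s : Fin L, MvPolynomial.C (u s i) * MvPolynomial.X (Sum.inl s)) *
        (∑ s' : Fin L, MvPolynomial.C (v s' i) * MvPolynomial.X (Sum.inr s'))))
    = ∑ h : Fin N → Option (Fin L × Fin L), MvPolynomial.monomial (Efn h) (cfn u v h) := by
  have hfac : ∀ i : Fin N,
      (1 + (∑ s : Fin L, MvPolynomial.C (u s i) * MvPolynomial.X (Sum.inl s)) *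
        (∑ s' : Fin L, MvPolynomial.C (v s' i) * MvPolynomial.X (Sum.inr s')))
      = ∑ t : Option (Fin L × Fin L),
          MvPolynomial.monomial
            (t.elim (0 : (Fin L ⊕ Fin L) →₀ ℕ)
              (fun q => Finsupp.single (Sum.inl q.1) 1 + Finsupp.single (Sum.inr q.2) 1))
            (t.elim 1 (fun q => u q.1 i * v q.2 i)) := by
    intro i
    rw [Fintype.sum_option]
    simp only [Option.elim_none, Option.elim_some]
    rw [Finset.sum_mul_sum, Fintype.sum_prod_type]
    congr 1
    · refine Finset.sum_congr rfl fun s _ => Finset.sum_congr rfl fun s' _ => ?_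
      rw [MvPolynomial.C_mul_X_eq_monomial, MvPolynomial.C_mul_X_eq_monomial,
        MvPolynomial.monomial_mul]
  calc (∏ i : Fin N, _) = _ := Finset.prod_congr rfl fun i _ => hfac i
    _ = _ := by
        rw [Finset.prod_univ_sum]
        rw [Fintype.piFinset_univ]
        refine Finset.sum_congr rfl fun h _ => ?_
        rw [prod_monomial]
        rfl

lemma Efn_apply_inl (h : Fin N → Option (Fin L × Fin L)) (s : Fin L) :
    Efn h (Sum.inl s) = pL h s := by
  rw [Efn, Finsupp.finset_sum_apply]
  refine Finset.sum_congr rfl fun i _ => ?_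
  cases hi : h i with
  | none => simp
  | some q =>
    simp only [Option.elim_some, Finsupp.add_apply, Finsupp.single_apply, Option.map_some]
    simp [Finsupp.single_apply, eq_comm]

lemma Efn_apply_inr (h : Fin N → Option (Fin L × Fin L)) (s : Fin L) :
    Efn h (Sum.inr s) = pR h s := by
  rw [Efn, Finsupp.finset_sum_apply]
  refine Finset.sum_congr rfl fun i _ => ?_
  cases hi : h i with
  | none => simp
  | some q =>
    simp only [Option.elim_some, Finsupp.add_apply, Finsupp.single_apply, Option.map_some]
    simp [Finsupp.single_apply, eq_comm]

lemma Efn_eq_iff (h : Fin N → Option (Fin L × Fin L)) (p : Fin L → ℕ) :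
    Efn h = Finsupp.equivFunOnFinite.symm (Sum.elim p p) ↔ (pL h = p ∧ pR h = p) := by
  rw [Finsupp.ext_iff]
  constructor
  · intro he
    constructor
    · funext s
      have := he (Sum.inl s)
      rwa [Efn_apply_inl, Finsupp.coe_equivFunOnFinite_symm, Sum.elim_inl] at this
    · funext s
      have := he (Sum.inr s)
      rwa [Efn_apply_inr, Finsupp.coe_equivFunOnFinite_symm, Sum.elim_inr] at this
  · rintro ⟨h1, h2⟩ x
    cases x with
    | inl s => rw [Efn_apply_inl, Finsupp.coe_equivFunOnFinite_symm, Sum.elim_inl, h1]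
    | inr s => rw [Efn_apply_inr, Finsupp.coe_equivFunOnFinite_symm, Sum.elim_inr, h2]

lemma rhs_eq (u v : Fin L → Fin N → ℂ) (F : MvPolynomial (Fin L ⊕ Fin L) ℂ)
    (hF : F = ∏ i : Fin N,
      (1 + (∑ s : Fin L, MvPolynomial.C (u s i) * MvPolynomial.X (Sum.inl s)) *
        (∑ s' : Fin L, MvPolynomial.C (v s' i) * MvPolynomial.X (Sum.inr s')))) :
    (∑ᶠ p : Fin L → ℕ, (∏ s : Fin L, ((p s).factorial : ℂ)) *
        MvPolynomial.coeff (Finsupp.equivFunOnFinite.symm (Sum.elim p p)) F)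
    = ∑ h : Fin N → Option (Fin L × Fin L),
        (if pL h = pR h then ((∏ s, ((pL h s).factorial : ℂ)) * cfn u v h) else 0) := by
  have hco : ∀ p : Fin L → ℕ,
      MvPolynomial.coeff (Finsupp.equivFunOnFinite.symm (Sum.elim p p)) F
      = ∑ h : Fin N → Option (Fin L × Fin L),
          (if Efn h = Finsupp.equivFunOnFinite.symm (Sum.elim p p) then cfn u v h else 0) := by
    intro p
    rw [hF, F_eq, MvPolynomial.coeff_sum]
    exact Finset.sum_congr rfl fun h _ => MvPolynomial.coeff_monomial _ _ _
  have hsupp : (Function.support fun p : Fin L → ℕ =>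
      (∏ s : Fin L, ((p s).factorial : ℂ)) *
        MvPolynomial.coeff (Finsupp.equivFunOnFinite.symm (Sum.elim p p)) F)
      ⊆ ↑(Finset.image pL (Finset.univ : Finset (Fin N → Option (Fin L × Fin L)))) := by
    intro p hp
    simp only [Function.mem_support] at hp
    have hc : MvPolynomial.coeff (Finsupp.equivFunOnFinite.symm (Sum.elim p p)) F ≠ 0 := by
      intro h0; exact hp (by rw [h0, mul_zero])
    rw [hco p] at hc
    obtain ⟨h, -, hne⟩ := Finset.exists_ne_zero_of_sum_ne_zero hc
    have hEe : Efn h = Finsupp.equivFunOnFinite.symm (Sum.elim p p) := by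
      by_contra hcon; rw [if_neg hcon] at hne; exact hne rfl
    obtain ⟨h1, -⟩ := (Efn_eq_iff h p).mp hEe
    simp only [Finset.coe_image, Set.mem_image, Finset.mem_coe, Finset.coe_univ, Set.image_univ,
      Set.mem_range]
    exact ⟨h, h1⟩
  rw [finsum_eq_finset_sum_of_support_subset _ hsupp]
  simp_rw [hco, Finset.mul_sum]
  rw [Finset.sum_comm]
  refine Finset.sum_congr rfl fun h _ => ?_
  have key : ∀ p : Fin L → ℕ,
      (∏ s : Fin L, ((p s).factorial : ℂ)) *
        (if Efn h = Finsupp.equivFunOnFinite.symm (Sum.elim p p) then cfn u v h else 0)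
      = if p = pL h then
          (if pL h = pR h then ((∏ s, ((pL h s).factorial : ℂ)) * cfn u v h) else 0) else 0 := by
    intro p
    rcases eq_or_ne p (pL h) with rfl | hne
    · rw [if_pos rfl]
      rcases eq_or_ne (pL h) (pR h) with hm | hm
      · rw [if_pos hm, if_pos ((Efn_eq_iff h (pL h)).mpr ⟨rfl, hm.symm⟩)]
      · rw [if_neg hm, if_neg, mul_zero]
        intro hc
        exact hm ((((Efn_eq_iff h (pL h)).mp hc).2).symm ▸ rfl)
    · rw [if_neg hne, if_neg, mul_zero]
      intro hc
      exact hne (((Efn_eq_iff h p).mp hc).1.symm ▸ rfl)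
  simp_rw [key]
  rw [Finset.sum_ite_eq' (Finset.image pL Finset.univ) (pL h)]
  rw [if_pos (Finset.mem_image_of_mem pL (Finset.mem_univ h))]

def phiT (h : Fin N → Option (Fin L × Fin L)) : Fin N → Fin L ⊕ Fin N :=
  fun i => (h i).elim (Sum.inr i) (fun q => Sum.inl q.1)

def psiT (h : Fin N → Option (Fin L × Fin L)) : Fin N → Fin L ⊕ Fin N :=
  fun i => (h i).elim (Sum.inr i) (fun q => Sum.inl q.2)

def Qp (h : Fin N → Option (Fin L × Fin L)) (σ : Equiv.Perm (Fin N)) : Prop :=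
  ∀ i, psiT h (σ i) = phiT h i

instance QpDec (h : Fin N → Option (Fin L × Fin L)) : DecidablePred (Qp h) :=
  fun σ => inferInstanceAs (Decidable (∀ i, psiT h (σ i) = phiT h i))

noncomputable def gT (u v : Fin L → Fin N → ℂ) (σ : Equiv.Perm (Fin N))
    (k : Fin N → Option (Fin L)) : ℂ :=
  ∏ i, (k i).elim (if i = σ i then 1 else 0) (fun s => u s i * v s (σ i))

def hof (σ : Equiv.Perm (Fin N)) (k : Fin N → Option (Fin L)) :
    Fin N → Option (Fin L × Fin L) :=
  fun i => (k i).bind (fun s => (k (σ.symm i)).map (fun s' => (s, s')))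

def kof (h : Fin N → Option (Fin L × Fin L)) : Fin N → Option (Fin L) :=
  fun i => (h i).map Prod.fst

lemma phiT_eq_inl {h : Fin N → Option (Fin L × Fin L)} {i : Fin N} {s : Fin L} :
    phiT h i = Sum.inl s ↔ (h i).map Prod.fst = some s := by
  cases hi : h i <;> simp [phiT, hi]

lemma psiT_eq_inl {h : Fin N → Option (Fin L × Fin L)} {i : Fin N} {s : Fin L} :
    psiT h i = Sum.inl s ↔ (h i).map Prod.snd = some s := by
  cases hi : h i <;> simp [psiT, hi]

lemma phiT_eq_inr {h : Fin N → Option (Fin L × Fin L)} {i j : Fin N} :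
    phiT h i = Sum.inr j ↔ (i = j ∧ h j = none) := by
  cases hi : h i
  · simp only [phiT, hi, Option.elim_none, Sum.inr.injEq]
    constructor
    · rintro rfl; exact ⟨rfl, hi⟩
    · rintro ⟨rfl, -⟩; rfl
  · simp only [phiT, hi, Option.elim_some]
    constructor
    · rintro ⟨⟩
    · rintro ⟨rfl, hj⟩; rw [hj] at hi; cases hi

lemma psiT_eq_inr {h : Fin N → Option (Fin L × Fin L)} {i j : Fin N} :
    psiT h i = Sum.inr j ↔ (i = j ∧ h j = none) := by
  cases hi : h i
  · simp only [psiT, hi, Option.elim_none, Sum.inr.injEq]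
    constructor
    · rintro rfl; exact ⟨rfl, hi⟩
    · rintro ⟨rfl, -⟩; rfl
  · simp only [psiT, hi, Option.elim_some]
    constructor
    · rintro ⟨⟩
    · rintro ⟨rfl, hj⟩; rw [hj] at hi; cases hi

section Paux
variable {σ : Equiv.Perm (Fin N)} {k : Fin N → Option (Fin L)}
  (hP : ∀ i, k i = none → σ i = i)

include hP

lemma symm_apply_of_none {i : Fin N} (hi : k i = none) : σ.symm i = i := by
  have h1 := hP i hi
  conv_lhs => rw [← h1]
  exact σ.symm_apply_apply i

lemma k_symm_ne_none {i : Fin N} (hi : k i ≠ none) : k (σ.symm i) ≠ none := by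
  intro hcon
  have h1 : σ (σ.symm i) = σ.symm i := hP _ hcon
  rw [σ.apply_symm_apply] at h1
  exact hi (by rw [h1]; exact hcon)

lemma k_apply_ne_none {i : Fin N} (hi : k i ≠ none) : k (σ i) ≠ none := by
  intro hcon
  have h1 : σ (σ i) = σ i := hP _ hcon
  have h2 : σ i = i := σ.injective h1
  rw [h2] at hcon
  exact hi hcon

lemma kof_hof : kof (hof σ k) = k := by
  funext i
  cases hi : k i with
  | none => simp [kof, hof, hi]
  | some s =>
    obtain ⟨s', hs'⟩ := Option.ne_none_iff_exists'.mp
      (k_symm_ne_none hP (by rw [hi]; exact Option.some_ne_none s))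
    simp [kof, hof, hi, hs']

lemma Qp_hof : Qp (hof σ k) σ := by
  intro i
  cases hi : k i with
  | none =>
    have hfix : σ i = i := hP i hi
    have h0 : hof σ k i = none := by simp [hof, hi]
    rw [show psiT (hof σ k) (σ i) = Sum.inr i from psiT_eq_inr.mpr ⟨hfix, h0⟩,
      show phiT (hof σ k) i = Sum.inr i from phiT_eq_inr.mpr ⟨rfl, h0⟩]
  | some s =>
    have hne : k i ≠ none := by rw [hi]; exact Option.some_ne_none s
    obtain ⟨a, ha⟩ := Option.ne_none_iff_exists'.mp (k_apply_ne_none hP hne)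
    obtain ⟨b, hb⟩ := Option.ne_none_iff_exists'.mp (k_symm_ne_none hP hne)
    have h1 : Option.map Prod.snd (hof σ k (σ i)) = some s := by
      simp [hof, σ.symm_apply_apply, ha, hi]
    have h2 : Option.map Prod.fst (hof σ k i) = some s := by
      simp [hof, hi, hb]
    rw [psiT_eq_inl.mpr h1, phiT_eq_inl.mpr h2]

end Paux

lemma P_of_Qp {h : Fin N → Option (Fin L × Fin L)} {σ : Equiv.Perm (Fin N)} (hQ : Qp h σ) :
    ∀ i, kof h i = none → σ i = i := by
  intro i hi
  have hni : h i = none := by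
    cases hhi : h i
    · rfl
    · rw [kof, hhi] at hi; cases hi
  have := hQ i
  rw [phiT_eq_inr.mpr ⟨rfl, hni⟩] at this
  exact (psiT_eq_inr.mp this).1

lemma hof_kof {h : Fin N → Option (Fin L × Fin L)} {σ : Equiv.Perm (Fin N)} (hQ : Qp h σ) :
    hof σ (kof h) = h := by
  funext i
  cases hi : h i with
  | none => simp [hof, kof, hi]
  | some q =>
    have hq : psiT h (σ (σ.symm i)) = phiT h (σ.symm i) := hQ (σ.symm i)
    rw [σ.apply_symm_apply] at hq
    have hsnd : psiT h i = Sum.inl q.2 := psiT_eq_inl.mpr (by simp [hi])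
    have hfst : Option.map Prod.fst (h (σ.symm i)) = some q.2 :=
      phiT_eq_inl.mp (hq.symm.trans hsnd)
    simp only [hof, kof, hi, Option.map_some, Option.bind_some, hfst]

lemma gT_eq_cfn (u v : Fin L → Fin N → ℂ) {σ : Equiv.Perm (Fin N)}
    {k : Fin N → Option (Fin L)} (hP : ∀ i, k i = none → σ i = i) :
    gT u v σ k = cfn u v (hof σ k) := by
  have split : cfn u v (hof σ k)
      = (∏ i, (hof σ k i).elim 1 (fun q => u q.1 i)) *
        (∏ i, (hof σ k i).elim 1 (fun q => v q.2 i)) := by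
    rw [cfn, ← Finset.prod_mul_distrib]
    refine Finset.prod_congr rfl fun i _ => ?_
    cases hi : hof σ k i <;> simp
  rw [split]
  have hu : ∀ i, (hof σ k i).elim 1 (fun q => u q.1 i) = (k i).elim 1 (fun s => u s i) := by
    intro i
    cases hi : k i with
    | none => simp [hof, hi]
    | some s =>
      obtain ⟨b, hb⟩ := Option.ne_none_iff_exists'.mp
        (k_symm_ne_none hP (by rw [hi]; exact Option.some_ne_none s))
      simp [hof, hi, hb]
  have hv : ∀ i, (hof σ k i).elim 1 (fun q => v q.2 i)
      = (k (σ.symm i)).elim 1 (fun s => v s i) := by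
    intro i
    cases hi : k i with
    | none =>
      have h2 : σ.symm i = i := symm_apply_of_none hP hi
      simp [hof, hi, h2]
    | some s =>
      obtain ⟨b, hb⟩ := Option.ne_none_iff_exists'.mp
        (k_symm_ne_none hP (by rw [hi]; exact Option.some_ne_none s))
      simp [hof, hi, hb]
  simp_rw [hu, hv]
  have hre : (∏ i, (k (σ.symm i)).elim 1 (fun s => v s i))
      = ∏ i, (k i).elim 1 (fun s => v s (σ i)) := by
    rw [← Equiv.prod_comp σ (fun i => (k (σ.symm i)).elim 1 (fun s => v s i))]
    refine Finset.prod_congr rfl fun i _ => ?_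
    rw [σ.symm_apply_apply]
  rw [hre, ← Finset.prod_mul_distrib, gT]
  refine Finset.prod_congr rfl fun i _ => ?_
  cases hi : k i with
  | none => simp [hi, hP i hi]
  | some s => simp [hi]

lemma card_fiber_inl (h : Fin N → Option (Fin L × Fin L)) (s : Fin L) :
    Fintype.card {i // phiT h i = Sum.inl s} = pL h s := by
  rw [Fintype.card_subtype, Finset.card_filter, pL]
  refine Finset.sum_congr rfl fun i _ => ?_
  simp_rw [phiT_eq_inl]

lemma card_fiber_inl' (h : Fin N → Option (Fin L × Fin L)) (s : Fin L) :
    Fintype.card {i // psiT h i = Sum.inl s} = pR h s := by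
  rw [Fintype.card_subtype, Finset.card_filter, pR]
  refine Finset.sum_congr rfl fun i _ => ?_
  simp_rw [psiT_eq_inl]

lemma card_fiber_inr (h : Fin N → Option (Fin L × Fin L)) (j : Fin N) :
    Fintype.card {i // phiT h i = Sum.inr j} = Fintype.card {i // psiT h i = Sum.inr j} :=
  Fintype.card_congr (Equiv.subtypeEquivRight fun i => by rw [phiT_eq_inr, psiT_eq_inr])

lemma card_fiber_inr_le (h : Fin N → Option (Fin L × Fin L)) (j : Fin N) :
    Fintype.card {i // phiT h i = Sum.inr j} ≤ 1 := by
  refine Fintype.card_le_one_iff.mpr ?_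
  rintro ⟨a, ha⟩ ⟨b, hb⟩
  have h1 := (phiT_eq_inr.mp ha).1
  have h2 := (phiT_eq_inr.mp hb).1
  exact Subtype.ext (h1.trans h2.symm)

lemma card_Qp (h : Fin N → Option (Fin L × Fin L)) :
    Fintype.card {σ : Equiv.Perm (Fin N) // Qp h σ}
      = if pL h = pR h then ∏ s, (pL h s).factorial else 0 := by
  have hmain := card_perm_intertwine (phiT h) (psiT h) (Qp h) (fun σ => Iff.rfl)
  rw [hmain]
  have hcond : (∀ y, Fintype.card {x // phiT h x = y} = Fintype.card {x // psiT h x = y})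
      ↔ pL h = pR h := by
    constructor
    · intro hy
      funext s
      have := hy (Sum.inl s)
      rwa [card_fiber_inl, card_fiber_inl'] at this
    · intro hpq y
      cases y with
      | inl s => rw [card_fiber_inl, card_fiber_inl', funext_iff.mp hpq s]
      | inr j => exact card_fiber_inr h j
  have hprod : (∏ y : Fin L ⊕ Fin N, (Fintype.card {x // phiT h x = y}).factorial)
      = ∏ s, (pL h s).factorial := by
    rw [Fintype.prod_sum_type]
    have h2 : (∏ j : Fin N, (Fintype.card {x // phiT h x = Sum.inr j}).factorial) = 1 := by
      refine Finset.prod_eq_one fun j _ => ?_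
      rcases Nat.le_one_iff_eq_zero_or_eq_one.mp (card_fiber_inr_le h j) with h0 | h0 <;>
        rw [h0] <;> rfl
    rw [h2, mul_one]
    exact Finset.prod_congr rfl fun s _ => by rw [card_fiber_inl]
  rw [hprod, if_congr hcond rfl rfl]

lemma lhs_eq (u v : Fin L → Fin N → ℂ) (W : Matrix (Fin N) (Fin N) ℂ)
    (hW : ∀ i k, W i k = ∑ s, u s i * v s k) :
    (∑ σ : Equiv.Perm (Fin N), ∏ i : Fin N, (1 + W) i (σ i))
    = ∑ h : Fin N → Option (Fin L × Fin L),
        (if pL h = pR h then ((∏ s, ((pL h s).factorial : ℂ)) * cfn u v h) else 0) := by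
  have step1 : ∀ σ : Equiv.Perm (Fin N),
      (∏ i : Fin N, (1 + W) i (σ i)) = ∑ k : Fin N → Option (Fin L), gT u v σ k := by
    intro σ
    have hfac : ∀ i : Fin N, (1 + W) i (σ i)
        = ∑ t : Option (Fin L),
            t.elim (if i = σ i then 1 else 0) (fun s => u s i * v s (σ i)) := by
      intro i
      rw [Fintype.sum_option]
      simp only [Option.elim_none, Option.elim_some]
      rw [Matrix.add_apply, Matrix.one_apply, hW]
    calc (∏ i : Fin N, (1 + W) i (σ i))
        = ∏ i : Fin N, ∑ t : Option (Fin L),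
            t.elim (if i = σ i then 1 else 0) (fun s => u s i * v s (σ i)) :=
          Finset.prod_congr rfl fun i _ => hfac i
      _ = ∑ k ∈ Fintype.piFinset (fun _ : Fin N => (univ : Finset (Option (Fin L)))),
            ∏ i : Fin N, (k i).elim (if i = σ i then 1 else 0) (fun s => u s i * v s (σ i)) :=
          Finset.prod_univ_sum _ _
      _ = ∑ k : Fin N → Option (Fin L), gT u v σ k := by rw [Fintype.piFinset_univ]; rfl
  simp_rw [step1]
  rw [← Fintype.sum_prod_type (fun x : Equiv.Perm (Fin N) × (Fin N → Option (Fin L)) =>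
    gT u v x.1 x.2)]
  have hvan : ∀ x ∈ (univ : Finset (Equiv.Perm (Fin N) × (Fin N → Option (Fin L)))),
      x ∉ univ.filter (fun x : Equiv.Perm (Fin N) × (Fin N → Option (Fin L)) =>
        ∀ i, x.2 i = none → x.1 i = i) → gT u v x.1 x.2 = 0 := by
    rintro ⟨σ, k⟩ - hx
    simp only [Finset.mem_filter, Finset.mem_univ, true_and] at hx
    push_neg at hx
    obtain ⟨i, hki, hσi⟩ := hx
    dsimp only
    refine Finset.prod_eq_zero (Finset.mem_univ i) ?_
    rw [hki, Option.elim_none, if_neg (fun e => hσi e.symm)]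
  rw [← Finset.sum_subset (Finset.filter_subset _ _) hvan]
  rw [Finset.sum_nbij' (f := fun x : Equiv.Perm (Fin N) × (Fin N → Option (Fin L)) =>
        gT u v x.1 x.2)
      (g := fun y : (Fin N → Option (Fin L × Fin L)) × Equiv.Perm (Fin N) => cfn u v y.1)
      (s := _) (t := (univ.filter
        (fun y : (Fin N → Option (Fin L × Fin L)) × Equiv.Perm (Fin N) => Qp y.1 y.2)))
      (i := fun x => (hof x.1 x.2, x.1)) (j := fun y => (y.2, kof y.1))
      (fun x hx => by
        simp only [Finset.mem_filter, Finset.mem_univ, true_and] at hx ⊢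
        exact Qp_hof hx)
      (fun y hy => by
        simp only [Finset.mem_filter, Finset.mem_univ, true_and] at hy ⊢
        exact P_of_Qp hy)
      (fun x hx => by
        simp only [Finset.mem_filter, Finset.mem_univ, true_and] at hx
        exact Prod.ext rfl (kof_hof hx))
      (fun y hy => by
        simp only [Finset.mem_filter, Finset.mem_univ, true_and] at hy
        exact Prod.ext (hof_kof hy) rfl)
      (fun x hx => by
        simp only [Finset.mem_filter, Finset.mem_univ, true_and] at hx
        exact gT_eq_cfn u v hx)]
  rw [Finset.sum_filter, Fintype.sum_prod_type]
  refine Finset.sum_congr rfl fun h _ => ?_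
  dsimp only
  rw [← Finset.sum_filter, Finset.sum_const, ← Fintype.card_subtype, nsmul_eq_mul]
  have : Fintype.card {σ : Equiv.Perm (Fin N) // Qp h σ}
      = if pL h = pR h then ∏ s, (pL h s).factorial else 0 := card_Qp h
  rw [this]
  split_ifs with hm
  · push_cast
    ring
  · simp

end GurvitsAux

/-- Gurvits's second algorithm identity.  For a rank-`≤ L` matrix
`W i k = ∑_s u s i * v s k`, the permanent of `I + W` is recovered from the
coefficients of the polynomial `F = ∏_i (1 + (∑_s α_s u s i)(∑_{s'} β_{s'} v s' i))`
on monomials whose `α`-degree vector matches the `β`-degree vector, weighted by the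
factorials of the degrees. -/
theorem permanent_one_add_low_rank_eq_matched_coeff_sum
    (N L : ℕ) (u v : Fin L → Fin N → ℂ)
    (W : Matrix (Fin N) (Fin N) ℂ)
    (hW : ∀ i k, W i k = ∑ s, u s i * v s k)
    (F : MvPolynomial (Fin L ⊕ Fin L) ℂ)
    (hF : F = ∏ i : Fin N,
      (1 + (∑ s : Fin L, MvPolynomial.C (u s i) * MvPolynomial.X (Sum.inl s)) *
        (∑ s' : Fin L, MvPolynomial.C (v s' i) * MvPolynomial.X (Sum.inr s')))) :
    (∑ σ : Equiv.Perm (Fin N), ∏ i : Fin N, (1 + W) i (σ i)) =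
      ∑ᶠ p : Fin L → ℕ, (∏ s : Fin L, ((p s).factorial : ℂ)) *
        MvPolynomial.coeff (Finsupp.equivFunOnFinite.symm (Sum.elim p p)) F := by
  exact (lhs_eq u v W hW).trans (rhs_eq u v F hF).symm
end

section
/- Let M be a natural number, let W be an M×M complex matrix, and let m, n : {1,…,M} → ℕ. Then in ℂ[x_1,…,x_M]: (∏_{j=1}^M n_j!) · [coefficient of ∏_{j=1}^M x_j^{n_j} in ∏_{i=1}^M ( x_i + Σ_{j=1}^M W_{ij}·x_j )^{m_i}] = Σ_{l : {1,…,M} → ℕ, l_i ≤ min(m_i, n_i) for all i} ( ∏_{i=1}^M binom(m_i, l_i)·binom(n_i, l_i)·l_i! ) · ( ∏_{j=1}^M (n_j − l_j)! ) · [coefficient of ∏_{j=1}^M x_j^{n_j − l_j} in ∏_{i=1}^M ( Σ_{j=1}^M W_{ij}·x_j )^{m_i − l_i}]. -/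
open MvPolynomial Finset


/-- Expansion of the (scaled-coefficient form of the) permanent of
`I + W` with row multiplicities `m` and column multiplicities `n` over the sets of
matched pairs using the identity part: a sum over `l` with `l i ≤ min (m i) (n i)` of
binomial and factorial weights times the corresponding coefficient for `W` with
multiplicities `m − l`, `n − l`. -/
theorem coeff_one_add_W_expansion
    (M : ℕ) (W : Matrix (Fin M) (Fin M) ℂ) (m n : Fin M → ℕ) :
    (∏ j : Fin M, ((n j).factorial : ℂ)) *
      MvPolynomial.coeff (Finsupp.equivFunOnFinite.symm n)
        (∏ i : Fin M,
          (MvPolynomial.X i + ∑ j : Fin M, MvPolynomial.C (W i j) * MvPolynomial.X j) ^ m i) =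
    ∑ l ∈ Fintype.piFinset (fun i : Fin M => Finset.range (min (m i) (n i) + 1)),
      (∏ i : Fin M, (((m i).choose (l i) : ℂ) * ((n i).choose (l i) : ℂ) * ((l i).factorial : ℂ))) *
      (∏ j : Fin M, (((n j - l j).factorial : ℂ))) *
      MvPolynomial.coeff (Finsupp.equivFunOnFinite.symm fun j => n j - l j)
        (∏ i : Fin M,
          (∑ j : Fin M, MvPolynomial.C (W i j) * MvPolynomial.X j) ^ (m i - l i)) := by
  classical
  set P : Fin M → MvPolynomial (Fin M) ℂ :=
    fun i => ∑ j : Fin M, MvPolynomial.C (W i j) * MvPolynomial.X j with hP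
  -- expand binomially
  have expand : (∏ i : Fin M, (X i + P i) ^ m i) =
      ∑ l ∈ Fintype.piFinset (fun i : Fin M => Finset.range (m i + 1)),
        ∏ i : Fin M,
          X i ^ l i * P i ^ (m i - l i) * ((m i).choose (l i) : MvPolynomial (Fin M) ℂ) := by
    simp only [add_pow]
    rw [Finset.prod_univ_sum]
  rw [expand, MvPolynomial.coeff_sum, Finset.mul_sum]
  -- extend RHS sum to the larger index set
  rw [Finset.sum_subset
    (show Fintype.piFinset (fun i : Fin M => Finset.range (min (m i) (n i) + 1)) ⊆
        Fintype.piFinset (fun i : Fin M => Finset.range (m i + 1)) by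
      intro l hl
      simp only [Fintype.mem_piFinset, Finset.mem_range] at hl ⊢
      intro i; have := hl i; omega)
    (by
      intro l hl hl'
      simp only [Fintype.mem_piFinset, Finset.mem_range] at hl hl'
      push_neg at hl'
      obtain ⟨i, hi⟩ := hl'
      have hni : n i < l i := by have := hl i; omega
      have : ((n i).choose (l i) : ℂ) = 0 := by
        rw [Nat.choose_eq_zero_of_lt hni]; norm_num
      rw [Finset.prod_eq_zero (Finset.mem_univ i) (by rw [this]; ring), zero_mul, zero_mul])]
  refine Finset.sum_congr rfl fun l hl => ?_
  simp only [Fintype.mem_piFinset, Finset.mem_range] at hl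
  have hlm : ∀ i, l i ≤ m i := fun i => by have := hl i; omega
  -- rewrite the product of three factors
  have hprod : (∏ i : Fin M,
      X i ^ l i * P i ^ (m i - l i) * ((m i).choose (l i) : MvPolynomial (Fin M) ℂ)) =
      MvPolynomial.monomial (Finsupp.equivFunOnFinite.symm l) 1 *
        (MvPolynomial.C ((∏ i : Fin M, (m i).choose (l i) : ℕ) : ℂ) *
          (∏ i : Fin M, P i ^ (m i - l i))) := by
    rw [Finset.prod_mul_distrib, Finset.prod_mul_distrib]
    have h1 : (∏ i : Fin M, (X i : MvPolynomial (Fin M) ℂ) ^ l i) =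
        MvPolynomial.monomial (Finsupp.equivFunOnFinite.symm l) 1 := by
      rw [← MvPolynomial.prod_X_pow_eq_monomial]
      refine (Finset.prod_subset (Finset.subset_univ _) ?_).symm
      intro x _ hx
      simp only [Finsupp.notMem_support_iff, Finsupp.coe_equivFunOnFinite_symm] at hx
      simp [hx]
    have h2 : (∏ i : Fin M, ((m i).choose (l i) : MvPolynomial (Fin M) ℂ)) =
        MvPolynomial.C ((∏ i : Fin M, (m i).choose (l i) : ℕ) : ℂ) := by
      rw [map_natCast, Nat.cast_prod]
    rw [h1, h2, mul_assoc, mul_comm (∏ i : Fin M, P i ^ (m i - l i))]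
  rw [hprod, MvPolynomial.coeff_monomial_mul', MvPolynomial.coeff_C_mul]
  by_cases hln : ∀ i, l i ≤ n i
  · have hle : Finsupp.equivFunOnFinite.symm l ≤ Finsupp.equivFunOnFinite.symm n := by
      rw [Finsupp.le_def]; simpa using hln
    rw [if_pos hle]
    have hsub : Finsupp.equivFunOnFinite.symm n - Finsupp.equivFunOnFinite.symm l
        = Finsupp.equivFunOnFinite.symm fun j => n j - l j := by
      ext x; simp
    rw [hsub]
    have hfac : (∏ j : Fin M, ((n j).factorial : ℂ)) =
        (∏ i : Fin M, (((n i).choose (l i) : ℂ) * ((l i).factorial : ℂ))) *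
          (∏ j : Fin M, (((n j - l j).factorial : ℂ))) := by
      rw [← Finset.prod_mul_distrib]
      refine Finset.prod_congr rfl fun i _ => ?_
      rw [← Nat.choose_mul_factorial_mul_factorial (hln i)]
      push_cast; ring
    rw [hfac]
    push_cast
    simp only [Finset.prod_mul_distrib]
    ring
  · push_neg at hln
    obtain ⟨i, hi⟩ := hln
    have hle : ¬ Finsupp.equivFunOnFinite.symm l ≤ Finsupp.equivFunOnFinite.symm n := by
      rw [Finsupp.le_def]
      push_neg
      exact ⟨i, by simpa using hi⟩
    rw [if_neg hle, mul_zero]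
    have hc : ((n i).choose (l i) : ℂ) = 0 := by
      rw [Nat.choose_eq_zero_of_lt hi]; norm_num
    symm
    rw [Finset.prod_eq_zero (Finset.mem_univ i) (show ((m i).choose (l i) : ℂ) *
      ((n i).choose (l i) : ℂ) * ((l i).factorial : ℂ) = 0 by rw [hc]; ring)]
    ring
end

section
/- Let n and r be natural numbers, let G be an n×r complex matrix, and let μ : {1,…,n} → ℂ. Then Σ_{σ} ( ∏_{i : σ(i) = i} μ_i ) · ( ∏_{i : i < σ(i)} Σ_{k=1}^r G_{ik}·G_{σ(i)k} ), where σ ranges over all involutions of {1,…,n}, equals Σ_{e : {1,…,r} → ℕ, e_j even for all j} [coefficient of the monomial ∏_{j=1}^r x_j^{e_j} in ∏_{i=1}^n ( μ_i + Σ_{j=1}^r G_{ij}·x_j ) ∈ ℂ[x_1,…,x_r]] · ∏_{j=1}^r (e_j − 1)!!. -/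
open Finset Equiv

lemma inv_apply_eq_iff {α : Type*} {σ : Equiv.Perm α} (hinv : ∀ x, σ (σ x) = x) (x y : α) :
    σ x = y ↔ x = σ y := by
  constructor
  · rintro rfl; exact (hinv x).symm
  · rintro rfl; exact hinv y

/-- number of fixed-point-free involutions -/
noncomputable def fpfCount (α : Type*) [Fintype α] [DecidableEq α] : ℕ :=
  Fintype.card {σ : Equiv.Perm α // (∀ x, σ (σ x) = x) ∧ ∀ x, σ x ≠ x}

def Dfac (m : ℕ) : ℕ := if Even m then (m - 1).doubleFactorial else 0

section step
variable {α : Type*} [DecidableEq α] (a b : α)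

omit [DecidableEq α] in
lemma fpf_key {σ : Equiv.Perm α} (hinv : ∀ x, σ (σ x) = x) (hab' : σ a = b) (x : α) :
    (x ≠ a ∧ x ≠ b) ↔ (σ x ≠ a ∧ σ x ≠ b) := by
  have hba : σ b = a := by have := hinv a; rwa [hab'] at this
  constructor
  · rintro ⟨h1, h2⟩
    exact ⟨fun h => h2 (by rw [inv_apply_eq_iff hinv] at h; rw [h, hab']),
           fun h => h1 (by rw [inv_apply_eq_iff hinv] at h; rw [h, hba])⟩
  · rintro ⟨h1, h2⟩
    exact ⟨fun h => h2 (by rw [h, hab']), fun h => h1 (by rw [h, hba])⟩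

/-- The per-b equivalence. -/
noncomputable def fpfStep (hab : b ≠ a) :
    {σ : Equiv.Perm α // ((∀ x, σ (σ x) = x) ∧ ∀ x, σ x ≠ x) ∧ σ a = b} ≃
    {τ : Equiv.Perm {x : α // x ≠ a ∧ x ≠ b} // (∀ x, τ (τ x) = x) ∧ ∀ x, τ x ≠ x} where
  toFun σ :=
    ⟨σ.1.subtypePerm (fun x => (fpf_key a b σ.2.1.1 σ.2.2 x).symm),
     fun x => Subtype.ext (σ.2.1.1 x),
     fun x h => σ.2.1.2 x (congrArg Subtype.val h)⟩
  invFun τ := by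
    have hfa : Equiv.Perm.ofSubtype τ.1 a = a :=
      Equiv.Perm.ofSubtype_apply_of_not_mem τ.1 (fun h => h.1 rfl)
    have hfb : Equiv.Perm.ofSubtype τ.1 b = b :=
      Equiv.Perm.ofSubtype_apply_of_not_mem τ.1 (fun h => h.2 rfl)
    have hmem : ∀ (x : α) (h : x ≠ a ∧ x ≠ b),
        Equiv.Perm.ofSubtype τ.1 x = (τ.1 ⟨x, h⟩ : α) :=
      fun x h => Equiv.Perm.ofSubtype_apply_of_mem τ.1 h
    refine ⟨Equiv.swap a b * Equiv.Perm.ofSubtype τ.1, ⟨fun x => ?_, fun x => ?_⟩, ?_⟩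
    · by_cases hx : x ≠ a ∧ x ≠ b
      · have h2 : ((τ.1 ⟨x, hx⟩ : α) ≠ a ∧ (τ.1 ⟨x, hx⟩ : α) ≠ b) := (τ.1 ⟨x, hx⟩).2
        simp only [Equiv.Perm.mul_apply]
        rw [hmem x hx, Equiv.swap_apply_of_ne_of_ne h2.1 h2.2, hmem _ h2]
        have : τ.1 ⟨(τ.1 ⟨x, hx⟩ : α), h2⟩ = τ.1 (τ.1 ⟨x, hx⟩) := by congr 1
        rw [this, τ.2.1 ⟨x, hx⟩]
        exact Equiv.swap_apply_of_ne_of_ne hx.1 hx.2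
      · push_neg at hx
        by_cases hxa : x = a
        · rw [hxa]
          simp only [Equiv.Perm.mul_apply]
          rw [hfa, Equiv.swap_apply_left, hfb, Equiv.swap_apply_right]
        · rw [hx hxa]
          simp only [Equiv.Perm.mul_apply]
          rw [hfb, Equiv.swap_apply_right, hfa, Equiv.swap_apply_left]
    · by_cases hx : x ≠ a ∧ x ≠ b
      · have h2 : ((τ.1 ⟨x, hx⟩ : α) ≠ a ∧ (τ.1 ⟨x, hx⟩ : α) ≠ b) := (τ.1 ⟨x, hx⟩).2
        simp only [Equiv.Perm.mul_apply]
        rw [hmem x hx, Equiv.swap_apply_of_ne_of_ne h2.1 h2.2]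
        intro h
        exact τ.2.2 ⟨x, hx⟩ (Subtype.ext h)
      · push_neg at hx
        by_cases hxa : x = a
        · rw [hxa]
          simp only [Equiv.Perm.mul_apply]
          rw [hfa, Equiv.swap_apply_left]
          exact hab
        · rw [hx hxa]
          simp only [Equiv.Perm.mul_apply]
          rw [hfb, Equiv.swap_apply_right]
          exact fun h => hab h.symm
    · simp only [Equiv.Perm.mul_apply]
      rw [hfa, Equiv.swap_apply_left]
  left_inv σ := by
    have hinv := σ.2.1.1
    have hab' := σ.2.2
    have hba : σ.1 b = a := by have := hinv a; rwa [hab'] at this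
    apply Subtype.ext
    ext x
    simp only [Equiv.Perm.mul_apply]
    by_cases hx : x ≠ a ∧ x ≠ b
    · rw [Equiv.Perm.ofSubtype_apply_of_mem (σ.1.subtypePerm (fun x => (fpf_key a b hinv hab' x).symm)) hx]
      have h2 : (σ.1 x ≠ a ∧ σ.1 x ≠ b) := (fpf_key a b hinv hab' x).mp hx
      simp only [Equiv.Perm.subtypePerm_apply]
      exact Equiv.swap_apply_of_ne_of_ne h2.1 h2.2
    · push_neg at hx
      by_cases hxa : x = a
      · rw [hxa, Equiv.Perm.ofSubtype_apply_of_not_mem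
          (σ.1.subtypePerm (fun x => (fpf_key a b hinv hab' x).symm)) (fun h => h.1 rfl),
          Equiv.swap_apply_left, hab']
      · rw [hx hxa, Equiv.Perm.ofSubtype_apply_of_not_mem
          (σ.1.subtypePerm (fun x => (fpf_key a b hinv hab' x).symm)) (fun h => h.2 rfl),
          Equiv.swap_apply_right, hba]
  right_inv τ := by
    apply Subtype.ext
    ext x
    simp only [Equiv.Perm.subtypePerm_apply, Equiv.Perm.mul_apply]
    rw [show ((Equiv.Perm.ofSubtype τ.1) x.1) = (τ.1 ⟨x.1, x.2⟩ : α) from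
      Equiv.Perm.ofSubtype_apply_of_mem τ.1 x.2]
    have h2 := (τ.1 ⟨x.1, x.2⟩).2
    rw [Equiv.swap_apply_of_ne_of_ne h2.1 h2.2]

end step

lemma Dfac_rec : ∀ N : ℕ, Dfac (N+1) = N * Dfac (N-1)
  | 0 => by decide
  | 1 => by decide
  | (m+2) => by
    show Dfac (m+3) = (m+2) * Dfac (m+1)
    unfold Dfac
    by_cases h : Even (m+1)
    · have h3 : Even (m+3) := by rcases h with ⟨k, hk⟩; exact ⟨k+1, by omega⟩
      rw [if_pos h, if_pos h3]
      show (m+2).doubleFactorial = (m+2) * (m).doubleFactorial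
      exact Nat.doubleFactorial_add_two m
    · have h3 : ¬ Even (m+3) := by
        intro ⟨k, hk⟩; exact h ⟨k-1, by omega⟩
      rw [if_neg h, if_neg h3, Nat.mul_zero]

lemma fpfCount_eq_aux : ∀ (N : ℕ) (α : Type) [Fintype α] [DecidableEq α],
    Fintype.card α = N → fpfCount α = Dfac N := by
  intro N
  induction N using Nat.strong_induction_on with
  | _ N IH =>
    intro α _ _ hN
    rcases Nat.eq_zero_or_pos N with h0 | hpos
    · subst h0
      haveI : IsEmpty α := Fintype.card_eq_zero_iff.mp hN
      have : Dfac 0 = 1 := by decide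
      rw [this]
      rw [fpfCount, Fintype.card_eq_one_iff]
      refine ⟨⟨1, fun x => rfl, fun x => (IsEmpty.false x).elim⟩, ?_⟩
      · intro σ
        apply Subtype.ext
        ext x
        exact (IsEmpty.false x).elim
    · have hα : Nonempty α := Fintype.card_pos_iff.mp (hN ▸ hpos)
      obtain ⟨a⟩ := hα
      classical
      have hcard : fpfCount α =
          (Finset.univ.filter (fun σ : Equiv.Perm α =>
            (∀ x, σ (σ x) = x) ∧ ∀ x, σ x ≠ x)).card := by
        rw [fpfCount, Fintype.card_subtype]
      rw [hcard]
      rw [Finset.card_eq_sum_card_fiberwise (f := fun σ : Equiv.Perm α => σ a)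
        (t := Finset.univ.filter (· ≠ a))
        (by intro σ hσ
            simp only [Finset.coe_filter, Finset.mem_coe, Set.mem_toFinset, Set.mem_setOf_eq, Finset.mem_filter, Finset.mem_univ, true_and] at hσ ⊢
            exact hσ.2 a)]
      have hfib : ∀ b ∈ Finset.univ.filter (· ≠ a),
          ((Finset.univ.filter (fun σ : Equiv.Perm α =>
            (∀ x, σ (σ x) = x) ∧ ∀ x, σ x ≠ x)).filter (fun σ => σ a = b)).card
          = Dfac (N - 2) := by
        intro b hb
        simp only [Finset.mem_filter, Finset.mem_univ, true_and] at hb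
        have hba : b ≠ a := hb
        rw [Finset.filter_filter]
        have : ((Finset.univ.filter (fun σ : Equiv.Perm α =>
            ((∀ x, σ (σ x) = x) ∧ ∀ x, σ x ≠ x) ∧ σ a = b))).card
            = Fintype.card {σ : Equiv.Perm α //
                ((∀ x, σ (σ x) = x) ∧ ∀ x, σ x ≠ x) ∧ σ a = b} := by
          rw [Fintype.card_subtype]
        rw [this, Fintype.card_congr (fpfStep a b hba)]
        have hsub : Fintype.card {x : α // x ≠ a ∧ x ≠ b} = N - 2 := by
          rw [Fintype.card_subtype]
          have : Finset.univ.filter (fun x : α => x ≠ a ∧ x ≠ b)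
              = Finset.univ \ {a, b} := by
            ext x
            simp [and_comm]
          rw [this, Finset.card_sdiff_of_subset (Finset.subset_univ _), Finset.card_univ, hN]
          congr 1
          rw [Finset.card_insert_of_notMem (by simp [hba.symm]), Finset.card_singleton]
        have hlt : N - 2 < N := by omega
        have := IH (N - 2) hlt {x : α // x ≠ a ∧ x ≠ b} hsub
        rw [fpfCount] at this
        exact this
      rw [Finset.sum_congr rfl hfib, Finset.sum_const, smul_eq_mul]
      have hcard2 : (Finset.univ.filter (· ≠ a)).card = N - 1 := by
        rw [Finset.filter_ne', Finset.card_erase_of_mem (Finset.mem_univ a),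
          Finset.card_univ, hN]
      rw [hcard2]
      have : N = (N - 1) + 1 := by omega
      rw [this, Dfac_rec]
      congr 2
      omega

section glue
variable {α β : Type} [Fintype α] [DecidableEq α] [Fintype β] [DecidableEq β] (f : α → Option β)

set_option linter.unusedSectionVars false

def glueFun (u : Π j : β, {τ : Equiv.Perm {x : α // f x = some j} //
    (∀ x, τ (τ x) = x) ∧ ∀ x, τ x ≠ x}) (x : α) : α :=
  if h : (f x).isSome then ((u ((f x).get h)).1 ⟨x, (Option.some_get h).symm⟩ : α) else x

lemma glueFun_none (u) (x : α) (hx : f x = none) : glueFun f u x = x := by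
  rw [glueFun, dif_neg]; rw [hx]; simp

lemma glueFun_some (u) (x : α) (j : β) (hx : f x = some j) :
    glueFun f u x = ((u j).1 ⟨x, hx⟩ : α) := by
  have h : (f x).isSome := by rw [hx]; rfl
  rw [glueFun, dif_pos h]
  have hj : (f x).get h = j := by simp [hx]
  subst hj
  rfl

lemma glueFun_invol (u) : Function.Involutive (glueFun f u) := by
  intro x
  cases hx : f x with
  | none => rw [glueFun_none f u x hx, glueFun_none f u x hx]
  | some j =>
    rw [glueFun_some f u x j hx]
    have hy : f ((u j).1 ⟨x, hx⟩ : α) = some j := ((u j).1 ⟨x, hx⟩).2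
    rw [glueFun_some f u _ j hy]
    have : (⟨((u j).1 ⟨x, hx⟩ : α), hy⟩ : {x : α // f x = some j}) = (u j).1 ⟨x, hx⟩ :=
      Subtype.ext rfl
    rw [this, (u j).2.1 ⟨x, hx⟩]

def restrFam (σ : {σ : Equiv.Perm α // (∀ x, σ (σ x) = x) ∧ (∀ i, f i = none ↔ σ i = i) ∧
      (∀ i, f (σ i) = f i)}) : Π j : β, {τ : Equiv.Perm {x : α // f x = some j} //
      (∀ x, τ (τ x) = x) ∧ ∀ x, τ x ≠ x} := fun j =>
  ⟨σ.1.subtypePerm (fun x => by rw [show (f x = some j ↔ f (σ.1 x) = some j) from by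
      rw [σ.2.2.2 x]]),
   fun x => Subtype.ext (σ.2.1 x),
   fun x h => by
     have : σ.1 x = x := congrArg Subtype.val h
     have h2 := (σ.2.2.1 x.1).mpr this
     rw [x.2] at h2
     exact Option.some_ne_none j h2⟩

/-- gluing fixed-point-free involutions on fibers into one involution -/
def glueEquiv : (Π j : β, {τ : Equiv.Perm {x : α // f x = some j} //
      (∀ x, τ (τ x) = x) ∧ ∀ x, τ x ≠ x}) ≃
    {σ : Equiv.Perm α // (∀ x, σ (σ x) = x) ∧ (∀ i, f i = none ↔ σ i = i) ∧
      (∀ i, f (σ i) = f i)} where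
  toFun u := by
    refine ⟨(glueFun_invol f u).toPerm, glueFun_invol f u, fun i => ⟨fun h => ?_, fun h => ?_⟩,
      fun i => ?_⟩
    · exact glueFun_none f u i h
    · by_contra hne
      obtain ⟨j, hj⟩ : ∃ j, f i = some j := Option.ne_none_iff_exists'.mp hne
      have h' : glueFun f u i = i := h
      rw [glueFun_some f u i j hj] at h'
      exact (u j).2.2 ⟨i, hj⟩ (Subtype.ext h')
    · show f (glueFun f u i) = f i
      cases hx : f i with
      | none => rw [glueFun_none f u i hx, hx]
      | some j =>
        have h1 : f (glueFun f u i) = some j := by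
          rw [glueFun_some f u i j hx]; exact ((u j).1 ⟨i, hx⟩).2
        exact h1
  invFun := restrFam f
  left_inv u := by
    funext j
    apply Subtype.ext
    ext x
    show glueFun f u x.1 = ((u j).1 x : α)
    rw [glueFun_some f u x.1 j x.2]
  right_inv σ := by
    apply Subtype.ext
    ext x
    show glueFun f (restrFam f σ) x = σ.1 x
    cases hx : f x with
    | none => rw [glueFun_none f _ x hx]; exact ((σ.2.2.1 x).mp hx).symm
    | some j => rw [glueFun_some f _ x j hx]; rfl

end glue
open MvPolynomial

section poly
variable {n r : ℕ} (G : Matrix (Fin n) (Fin r) ℂ) (μ : Fin n → ℂ)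

noncomputable def wt (f : Fin n → Option (Fin r)) : ℂ := ∏ i, (f i).elim (μ i) (G i)

def cnt (f : Fin n → Option (Fin r)) (j : Fin r) : ℕ :=
  (Finset.univ.filter (fun i => f i = some j)).card

noncomputable def cntE (f : Fin n → Option (Fin r)) : Fin r →₀ ℕ :=
  ∑ i, (f i).elim 0 (fun j => Finsupp.single j 1)

lemma cntE_apply (f : Fin n → Option (Fin r)) (j : Fin r) : cntE f j = cnt f j := by
  rw [cntE, Finsupp.finset_sum_apply, cnt, Finset.card_filter]
  refine Finset.sum_congr rfl (fun i _ => ?_)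
  cases hx : f i with
  | none => simp
  | some j' =>
    simp only [Option.elim_some, Finsupp.single_apply]
    by_cases h : j' = j
    · subst h; simp
    · rw [if_neg h, if_neg (by simpa using h)]

lemma monomial_prod {ι : Type*} (s : Finset ι) (d : ι → (Fin r →₀ ℕ)) (a : ι → ℂ) :
    ∏ i ∈ s, (monomial (d i) (a i)) = monomial (∑ i ∈ s, d i) (∏ i ∈ s, a i) := by
  induction s using Finset.cons_induction with
  | empty => simp [MvPolynomial.monomial_zero', MvPolynomial.C_1]
  | cons i s hi ih =>
    rw [Finset.prod_cons, ih, MvPolynomial.monomial_mul, Finset.sum_cons, Finset.prod_cons]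

lemma prod_eq_sum_monomial :
    (∏ i : Fin n, (MvPolynomial.C (μ i) + ∑ j : Fin r, MvPolynomial.C (G i j) * MvPolynomial.X j))
    = ∑ f : Fin n → Option (Fin r), monomial (cntE f) (wt G μ f) := by
  have h1 : ∀ i : Fin n, (MvPolynomial.C (μ i) + ∑ j : Fin r, MvPolynomial.C (G i j) * MvPolynomial.X j)
      = ∑ o ∈ (Finset.univ : Finset (Option (Fin r))),
          monomial (o.elim 0 (fun j => Finsupp.single j 1)) (o.elim (μ i) (G i)) := by
    intro i
    rw [Fintype.sum_option]
    simp only [Option.elim_none, Option.elim_some]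
    refine congrArg₂ (· + ·) MvPolynomial.C_apply ?_
    exact Finset.sum_congr rfl fun j _ => MvPolynomial.C_mul_X_eq_monomial
  calc (∏ i : Fin n, (MvPolynomial.C (μ i) + ∑ j : Fin r, MvPolynomial.C (G i j) * MvPolynomial.X j))
      = ∏ i : Fin n, ∑ o ∈ (Finset.univ : Finset (Option (Fin r))),
          monomial (o.elim 0 (fun j => Finsupp.single j 1)) (o.elim (μ i) (G i)) :=
        Finset.prod_congr rfl (fun i _ => h1 i)
    _ = ∑ f ∈ Fintype.piFinset (fun _ : Fin n => (Finset.univ : Finset (Option (Fin r)))),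
          ∏ i : Fin n, monomial ((f i).elim 0 (fun j => Finsupp.single j 1)) ((f i).elim (μ i) (G i)) :=
        Finset.prod_univ_sum _ _
    _ = ∑ f : Fin n → Option (Fin r), monomial (cntE f) (wt G μ f) := by
        rw [Fintype.piFinset_univ]
        refine Finset.sum_congr rfl (fun f _ => ?_)
        rw [monomial_prod]
        rfl

lemma coeff_P (d : Fin r →₀ ℕ) :
    MvPolynomial.coeff d (∏ i : Fin n, (MvPolynomial.C (μ i) + ∑ j : Fin r, MvPolynomial.C (G i j) * MvPolynomial.X j))
    = ∑ f : Fin n → Option (Fin r), if cntE f = d then wt G μ f else 0 := by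
  classical
  rw [prod_eq_sum_monomial, MvPolynomial.coeff_sum]
  exact Finset.sum_congr rfl fun f _ => MvPolynomial.coeff_monomial d (cntE f) (wt G μ f)


lemma claim4 :
    (∑ᶠ e ∈ {e : Fin r → ℕ | ∀ j, Even (e j)},
      MvPolynomial.coeff (Finsupp.equivFunOnFinite.symm e)
        (∏ i : Fin n, (MvPolynomial.C (μ i) + ∑ j : Fin r, MvPolynomial.C (G i j) * MvPolynomial.X j)) *
      ∏ j : Fin r, ((e j - 1).doubleFactorial : ℂ))
    = ∑ f : Fin n → Option (Fin r),
        if (∀ j, Even (cnt f j)) then wt G μ f * ∏ j : Fin r, ((cnt f j - 1).doubleFactorial : ℂ)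
        else 0 := by
  classical
  set P := (∏ i : Fin n, (MvPolynomial.C (μ i) + ∑ j : Fin r, MvPolynomial.C (G i j) * MvPolynomial.X j)) with hP
  set S := {e : Fin r → ℕ | ∀ j, Even (e j)} with hS
  set F := fun e : Fin r → ℕ => MvPolynomial.coeff (Finsupp.equivFunOnFinite.symm e) P *
      ∏ j : Fin r, ((e j - 1).doubleFactorial : ℂ) with hF
  have hcnt_le : ∀ (f : Fin n → Option (Fin r)) (j : Fin r), cnt f j ≤ n := by
    intro f j
    calc cnt f j ≤ (Finset.univ : Finset (Fin n)).card := Finset.card_filter_le _ _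
    _ = n := by simp
  set E : Finset (Fin r → ℕ) := Fintype.piFinset (fun _ : Fin r => Finset.range (n+1)) with hE
  have hmemE : ∀ f : Fin n → Option (Fin r), (fun j => cnt f j) ∈ E := by
    intro f
    rw [hE, Fintype.mem_piFinset]
    intro j
    rw [Finset.mem_range]
    exact Nat.lt_succ_of_le (hcnt_le f j)
  rw [finsum_mem_def, finsum_eq_finset_sum_of_support_subset _ (s := E) ?side]
  case side =>
    intro e he
    simp only [Function.mem_support] at he
    have heS : e ∈ S := by
      by_contra h
      rw [Set.indicator_of_notMem h] at he
      exact he rfl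
    rw [Set.indicator_of_mem heS] at he
    have hco : MvPolynomial.coeff (Finsupp.equivFunOnFinite.symm e) P ≠ 0 :=
      fun h0 => he (by rw [h0, zero_mul])
    rw [hP, coeff_P] at hco
    obtain ⟨f, -, hf⟩ := Finset.exists_ne_zero_of_sum_ne_zero hco
    have hfe : cntE f = Finsupp.equivFunOnFinite.symm e := by
      by_contra h
      rw [if_neg h] at hf
      exact hf rfl
    have : ∀ j, e j = cnt f j := by
      intro j
      have := congrArg (fun d => d j) hfe
      simpa [cntE_apply] using this.symm
    have : e = fun j => cnt f j := funext this
    rw [this]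
    exact Finset.mem_coe.mpr (hmemE f)
  have hterm : ∀ e ∈ E, Set.indicator S F e
      = ∑ f : Fin n → Option (Fin r),
          if (e = fun j => cnt f j) ∧ (∀ j, Even (e j)) then
            wt G μ f * ∏ j : Fin r, ((e j - 1).doubleFactorial : ℂ) else 0 := by
    intro e _
    by_cases heS : e ∈ S
    · rw [Set.indicator_of_mem heS]
      show MvPolynomial.coeff (Finsupp.equivFunOnFinite.symm e) P *
        (∏ j : Fin r, ((e j - 1).doubleFactorial : ℂ)) = _
      rw [hP, coeff_P, Finset.sum_mul]
      refine Finset.sum_congr rfl (fun f _ => ?_)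
      rw [ite_mul, zero_mul]
      refine if_congr ?_ rfl rfl
      constructor
      · intro h
        refine ⟨?_, heS⟩
        funext j
        have := congrArg (fun d => d j) h
        simpa [cntE_apply] using this.symm
      · rintro ⟨h, -⟩
        apply Finsupp.ext
        intro j
        rw [cntE_apply]
        have := congrArg (fun g : Fin r → ℕ => g j) h
        simpa using this.symm
    · rw [Set.indicator_of_notMem heS]
      symm
      refine Finset.sum_eq_zero (fun f _ => ?_)
      rw [if_neg]
      rintro ⟨-, h⟩
      exact heS h
  rw [Finset.sum_congr rfl hterm, Finset.sum_comm]
  refine Finset.sum_congr rfl (fun f _ => ?_)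
  have h1 : ∀ e ∈ E, (if (e = fun j => cnt f j) ∧ (∀ j, Even (e j)) then
      wt G μ f * ∏ j : Fin r, ((e j - 1).doubleFactorial : ℂ) else 0)
      = if e = fun j => cnt f j then
          (if (∀ j, Even (e j)) then wt G μ f * ∏ j : Fin r, ((e j - 1).doubleFactorial : ℂ) else 0)
        else 0 := by
    intro e _
    by_cases h : e = fun j => cnt f j
    · by_cases h2 : ∀ j, Even (e j)
      · rw [if_pos ⟨h, h2⟩, if_pos h, if_pos h2]
      · rw [if_neg (fun hc => h2 hc.2), if_pos h, if_neg h2]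
    · rw [if_neg (fun hc => h hc.1), if_neg h]
  rw [Finset.sum_congr rfl h1, Finset.sum_ite_eq' E (fun j => cnt f j), if_pos (hmemE f)]

end poly

section c1
variable {n r : ℕ} (G : Matrix (Fin n) (Fin r) ℂ) (μ : Fin n → ℂ)


def compat (σ : Equiv.Perm (Fin n)) (f : Fin n → Option (Fin r)) : Prop :=
  (∀ i, f i = none ↔ σ i = i) ∧ (∀ i, f (σ i) = f i)

instance (σ : Equiv.Perm (Fin n)) (f : Fin n → Option (Fin r)) : Decidable (compat σ f) := by
  unfold compat; infer_instance

variable (σ : Equiv.Perm (Fin n)) (hinv : ∀ x, σ (σ x) = x)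

def pairIdx (i : Fin n) (h : ¬ σ i = i) : {x : Fin n // x < σ x} :=
  if hlt : i < σ i then ⟨i, hlt⟩ else ⟨σ i, by
    rw [hinv i]
    rcases lt_trichotomy i (σ i) with h3 | h3 | h3
    · exact absurd h3 hlt
    · exact absurd h3.symm h
    · exact h3⟩

lemma pairIdx_lt (i : Fin n) (h : ¬ σ i = i) (hlt : i < σ i) :
    pairIdx σ hinv i h = ⟨i, hlt⟩ := dif_pos hlt

lemma pairIdx_gt (i : Fin n) (h : ¬ σ i = i) (hgt : σ i < i) :
    (pairIdx σ hinv i h : Fin n) = σ i := by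
  rw [pairIdx, dif_neg (by omega)]

lemma pairIdx_sigma (i : Fin n) (h : ¬ σ i = i) (h2 : ¬ σ (σ i) = σ i) :
    pairIdx σ hinv (σ i) h2 = pairIdx σ hinv i h := by
  by_cases hlt : i < σ i
  · apply Subtype.ext
    rw [pairIdx_lt σ hinv i h hlt, pairIdx_gt σ hinv (σ i) h2 (by rw [hinv i]; exact hlt), hinv i]
  · have hgt : σ i < i := by
      rcases lt_trichotomy i (σ i) with h3 | h3 | h3
      · exact absurd h3 hlt
      · exact absurd h3.symm h
      · exact h3
    apply Subtype.ext
    rw [pairIdx_gt σ hinv i h hgt, pairIdx_lt σ hinv (σ i) h2 (by rw [hinv i]; exact hgt)]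

def pcFun (c : {x : Fin n // x < σ x} → Fin r) : Fin n → Option (Fin r) :=
  fun i => if h : σ i = i then none else some (c (pairIdx σ hinv i h))

lemma pcFun_fix (c : {x : Fin n // x < σ x} → Fin r) (i : Fin n) (h : σ i = i) : pcFun σ hinv c i = none := dif_pos h

lemma pcFun_mov (c : {x : Fin n // x < σ x} → Fin r) (i : Fin n) (h : ¬ σ i = i) :
    pcFun σ hinv c i = some (c (pairIdx σ hinv i h)) := dif_neg h

lemma pcFun_compat (c : {x : Fin n // x < σ x} → Fin r) : compat σ (pcFun σ hinv c) := by
  constructor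
  · intro i
    by_cases h : σ i = i
    · rw [pcFun_fix σ hinv c i h]; simp [h]
    · rw [pcFun_mov σ hinv c i h]; simp [h]
  · intro i
    by_cases h : σ i = i
    · rw [h]
    · have h2 : ¬ σ (σ i) = σ i := fun e => h (((hinv i).symm.trans e).symm)
      rw [pcFun_mov σ hinv c (σ i) h2, pcFun_mov σ hinv c i h, pairIdx_sigma σ hinv i h h2]

def pcInv (f : {f : Fin n → Option (Fin r) // compat σ f}) : {x : Fin n // x < σ x} → Fin r :=
  fun x => (f.1 x.1).get (by
    rw [Option.isSome_iff_ne_none]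
    intro e
    exact (ne_of_gt x.2) ((f.2.1 x.1).mp e))

/-- colorings of pairs ≃ compatible fiber functions -/
noncomputable def pairColorEquiv :
    ({x : Fin n // x < σ x} → Fin r) ≃ {f : Fin n → Option (Fin r) // compat σ f} where
  toFun c := ⟨pcFun σ hinv c, pcFun_compat σ hinv c⟩
  invFun f := pcInv σ f
  left_inv c := by
    funext x
    have h : ¬ σ x.1 = x.1 := ne_of_gt x.2
    show ((pcFun σ hinv c) x.1).get _ = c x
    apply Option.some_injective
    rw [Option.some_get, pcFun_mov σ hinv c x.1 h, pairIdx_lt σ hinv x.1 h x.2]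
  right_inv f := by
    apply Subtype.ext
    funext i
    show pcFun σ hinv (pcInv σ f) i = f.1 i
    by_cases h : σ i = i
    · rw [pcFun_fix σ hinv _ i h]
      exact ((f.2.1 i).mpr h).symm
    · rw [pcFun_mov σ hinv _ i h]
      by_cases hlt : i < σ i
      · rw [pairIdx_lt σ hinv i h hlt]
        exact Option.some_get _
      · have hgt : σ i < i := by
          rcases lt_trichotomy i (σ i) with h3 | h3 | h3
          · exact absurd h3 hlt
          · exact absurd h3.symm h
          · exact h3
        have hpi : ((pairIdx σ hinv i h : {x : Fin n // x < σ x}) : Fin n) = σ i :=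
          pairIdx_gt σ hinv i h hgt
        show some (pcInv σ f (pairIdx σ hinv i h)) = f.1 i
        calc some (pcInv σ f (pairIdx σ hinv i h))
            = f.1 (pairIdx σ hinv i h).1 := Option.some_get _
          _ = f.1 (σ i) := by rw [hpi]
          _ = f.1 i := f.2.2 i

lemma filter_lt_eq : Finset.univ.filter (fun i => ¬ σ i = i ∧ i < σ i)
    = Finset.univ.filter (fun i : Fin n => i < σ i) := by
  ext i
  simp only [Finset.mem_filter, Finset.mem_univ, true_and]
  exact ⟨fun h => h.2, fun h => ⟨ne_of_gt h, h⟩⟩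

lemma filter_gt_eq : Finset.univ.filter (fun i => ¬ σ i = i ∧ ¬ i < σ i)
    = Finset.univ.filter (fun i : Fin n => σ i < i) := by
  ext i
  simp only [Finset.mem_filter, Finset.mem_univ, true_and]
  constructor
  · rintro ⟨h1, h2⟩
    rcases lt_trichotomy i (σ i) with h3 | h3 | h3
    · exact absurd h3 h2
    · exact absurd h3.symm h1
    · exact h3
  · intro h
    exact ⟨ne_of_lt h, by omega⟩

def movedEquiv : {z : Fin n // σ z < z} ≃ {x : Fin n // x < σ x} where
  toFun z := ⟨σ z.1, by rw [hinv]; exact z.2⟩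
  invFun y := ⟨σ y.1, by rw [hinv]; exact y.2⟩
  left_inv z := Subtype.ext (hinv z.1)
  right_inv y := Subtype.ext (hinv y.1)

lemma wt_pcFun (c : {x : Fin n // x < σ x} → Fin r) :
    wt G μ (pcFun σ hinv c) =
    (∏ i ∈ Finset.univ.filter (fun i => σ i = i), μ i) *
    ∏ x : {x : Fin n // x < σ x}, (G x.1 (c x) * G (σ x.1) (c x)) := by
  rw [wt]
  rw [← Finset.prod_filter_mul_prod_filter_not Finset.univ (fun i => σ i = i)
    (fun i => ((pcFun σ hinv c) i).elim (μ i) (G i))]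
  rw [← Finset.prod_filter_mul_prod_filter_not
    (Finset.univ.filter (fun i => ¬ σ i = i)) (fun i => i < σ i)
    (fun i => ((pcFun σ hinv c) i).elim (μ i) (G i))]
  rw [Finset.filter_filter, Finset.filter_filter, filter_lt_eq, filter_gt_eq]
  have h0 : ∏ i ∈ Finset.univ.filter (fun i => σ i = i),
      ((pcFun σ hinv c) i).elim (μ i) (G i) = ∏ i ∈ Finset.univ.filter (fun i => σ i = i), μ i := by
    refine Finset.prod_congr rfl (fun i hi => ?_)
    simp only [Finset.mem_filter, Finset.mem_univ, true_and] at hi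
    rw [pcFun_fix σ hinv c i hi]
    rfl
  have h1 : ∏ i ∈ Finset.univ.filter (fun i : Fin n => i < σ i),
      ((pcFun σ hinv c) i).elim (μ i) (G i)
      = ∏ x : {x : Fin n // x < σ x}, G x.1 (c x) := by
    rw [Finset.prod_subtype (p := fun i : Fin n => i < σ i)
      (Finset.univ.filter (fun i : Fin n => i < σ i))
      (by intro x; simp) (fun i => ((pcFun σ hinv c) i).elim (μ i) (G i))]
    refine Finset.prod_congr rfl (fun x _ => ?_)
    rw [pcFun_mov σ hinv c x.1 (ne_of_gt x.2), pairIdx_lt σ hinv x.1 (ne_of_gt x.2) x.2]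
    rfl
  have h2 : ∏ i ∈ Finset.univ.filter (fun i : Fin n => σ i < i),
      ((pcFun σ hinv c) i).elim (μ i) (G i)
      = ∏ x : {x : Fin n // x < σ x}, G (σ x.1) (c x) := by
    rw [Finset.prod_subtype (p := fun i : Fin n => σ i < i)
      (Finset.univ.filter (fun i : Fin n => σ i < i))
      (by intro x; simp) (fun i => ((pcFun σ hinv c) i).elim (μ i) (G i))]
    refine Fintype.prod_equiv (movedEquiv σ hinv) _ _ (fun z => ?_)
    have hz : ¬ σ z.1 = z.1 := ne_of_lt z.2
    rw [pcFun_mov σ hinv c z.1 hz]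
    have hpi : pairIdx σ hinv z.1 hz = movedEquiv σ hinv z :=
      Subtype.ext (pairIdx_gt σ hinv z.1 hz z.2)
    rw [hpi]
    show G z.1 (c (movedEquiv σ hinv z)) = G (σ (movedEquiv σ hinv z).1) (c (movedEquiv σ hinv z))
    congr 1
    show z.1 = σ (σ z.1)
    rw [hinv]
  rw [h0, h1, h2, ← Finset.prod_mul_distrib]

lemma claim1 (hinv : ∀ x, σ (σ x) = x) :
    (∏ i ∈ Finset.univ.filter (fun i => σ i = i), μ i) *
      (∏ i ∈ Finset.univ.filter (fun i => i < σ i), ∑ k : Fin r, G i k * G (σ i) k)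
    = ∑ f : Fin n → Option (Fin r), if compat σ f then wt G μ f else 0 := by
  classical
  have step1 : (∑ f : Fin n → Option (Fin r), if compat σ f then wt G μ f else 0)
      = ∑ f ∈ Finset.univ.filter (fun f => compat σ f), wt G μ f := (Finset.sum_filter _ _).symm
  rw [step1, Finset.sum_subtype (p := fun f => compat σ f)
    (Finset.univ.filter (fun f => compat σ f))
    (by intro f; simp) (fun f => wt G μ f)]
  rw [← Equiv.sum_comp (pairColorEquiv σ hinv) (fun x => wt G μ x.1)]
  have step2 : ∀ c : {x : Fin n // x < σ x} → Fin r,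
      wt G μ ((pairColorEquiv σ hinv c : {f // compat σ f}) : Fin n → Option (Fin r))
      = (∏ i ∈ Finset.univ.filter (fun i => σ i = i), μ i) *
        ∏ x : {x : Fin n // x < σ x}, (G x.1 (c x) * G (σ x.1) (c x)) :=
    fun c => wt_pcFun G μ σ hinv c
  rw [Finset.sum_congr rfl (fun c _ => step2 c), ← Finset.mul_sum]
  congr 1
  rw [Finset.prod_subtype (p := fun i : Fin n => i < σ i)
    (Finset.univ.filter (fun i : Fin n => i < σ i))
    (by intro x; simp) (fun i => ∑ k : Fin r, G i k * G (σ i) k)]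
  exact (Finset.prod_univ_sum (fun _ : {x : Fin n // x < σ x} => (Finset.univ : Finset (Fin r)))
    (fun x k => G x.1 k * G (σ x.1) k)).trans (by rw [Fintype.piFinset_univ])

end c1

section main

/-- low-rank loop hafnian identity.  The loop hafnian of the matrix
with off-diagonal entries `(G Gᵀ)_{ij}` and diagonal `μ`, written as a sum over
involutions, equals the sum over all-even exponent vectors `e` of the coefficient of
`∏_j x_j^{e_j}` in `∏_i (μ_i + ∑_j G i j x_j)` weighted by `∏_j (e_j − 1)!!`. -/
theorem loop_hafnian_low_rank_eq_even_coeff_sum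
    (n r : ℕ) (G : Matrix (Fin n) (Fin r) ℂ) (μ : Fin n → ℂ) :
    (∑ σ ∈ Finset.univ.filter (fun σ : Equiv.Perm (Fin n) => ∀ x, σ (σ x) = x),
      (∏ i ∈ Finset.univ.filter (fun i => σ i = i), μ i) *
      (∏ i ∈ Finset.univ.filter (fun i => i < σ i), ∑ k : Fin r, G i k * G (σ i) k)) =
    ∑ᶠ e ∈ {e : Fin r → ℕ | ∀ j, Even (e j)},
      MvPolynomial.coeff (Finsupp.equivFunOnFinite.symm e)
        (∏ i : Fin n, (MvPolynomial.C (μ i) + ∑ j : Fin r, MvPolynomial.C (G i j) * MvPolynomial.X j)) *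
      ∏ j : Fin r, ((e j - 1).doubleFactorial : ℂ) := by
  rw [claim4 G μ]
  rw [Finset.sum_filter]
  have hL : ∀ σ : Equiv.Perm (Fin n),
      (if (∀ x, σ (σ x) = x) then
        (∏ i ∈ Finset.univ.filter (fun i => σ i = i), μ i) *
        (∏ i ∈ Finset.univ.filter (fun i => i < σ i), ∑ k : Fin r, G i k * G (σ i) k) else 0)
      = ∑ f : Fin n → Option (Fin r),
          if ((∀ x, σ (σ x) = x) ∧ compat σ f) then wt G μ f else 0 := by
    intro σ
    by_cases hσ : ∀ x, σ (σ x) = x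
    · rw [if_pos hσ, claim1 G μ σ hσ]
      exact Finset.sum_congr rfl fun f _ => (if_congr (and_iff_right hσ).symm rfl rfl)
    · rw [if_neg hσ]
      exact (Finset.sum_eq_zero fun f _ => if_neg (fun h => hσ h.1)).symm
  rw [Finset.sum_congr rfl (fun σ _ => hL σ), Finset.sum_comm]
  refine Finset.sum_congr rfl fun f _ => ?_
  rw [← Finset.sum_filter, Finset.sum_const, nsmul_eq_mul]
  have hcard : (Finset.univ.filter
        (fun σ : Equiv.Perm (Fin n) => (∀ x, σ (σ x) = x) ∧ compat σ f)).card
      = ∏ j : Fin r, Dfac (cnt f j) := by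
    have h1 : (Finset.univ.filter
          (fun σ : Equiv.Perm (Fin n) => (∀ x, σ (σ x) = x) ∧ compat σ f)).card
        = Fintype.card {σ : Equiv.Perm (Fin n) // (∀ x, σ (σ x) = x) ∧
            (∀ i, f i = none ↔ σ i = i) ∧ (∀ i, f (σ i) = f i)} := by
      rw [Fintype.card_subtype]
      apply congrArg
      ext σ
      simp only [Finset.mem_filter, Finset.mem_univ, true_and, compat, and_assoc, Set.mem_toFinset, Set.mem_setOf_eq]
      exact Iff.trans Finset.mem_filter (and_iff_right (Finset.mem_univ _))
    rw [h1, Fintype.card_congr (glueEquiv f).symm, Fintype.card_pi]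
    refine Finset.prod_congr rfl fun j _ => ?_
    have h2 : Fintype.card {x : Fin n // f x = some j} = cnt f j := by
      rw [Fintype.card_subtype]; rfl
    have h3 := fpfCount_eq_aux (cnt f j) {x : Fin n // f x = some j} h2
    rw [fpfCount] at h3
    exact h3
  rw [hcard]
  by_cases hE : ∀ j, Even (cnt f j)
  · rw [if_pos hE]
    have : ∀ j ∈ (Finset.univ : Finset (Fin r)), Dfac (cnt f j) = (cnt f j - 1).doubleFactorial :=
      fun j _ => if_pos (hE j)
    rw [Finset.prod_congr rfl this]
    push_cast
    ring
  · obtain ⟨j0, hj0⟩ := not_forall.mp hE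
    have hz : (∏ j : Fin r, Dfac (cnt f j)) = 0 :=
      Finset.prod_eq_zero (Finset.mem_univ j0) (show Dfac (cnt f j0) = 0 from if_neg hj0)
    rw [if_neg hE, hz]
    simp

end main
end
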